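/- arXiv:math-ph/0305044 — 2 statements merged into one kernel-verified Lean document; each statement's English description precedes it below -/
import Mathlib

section
/- Let N ≥ 1 and let b_0 < a_1 < b_1 < ⋯ < a_N < b_N < a_{N+1} be real numbers, and let A be the N×N matrix with entries A_{kj} = ∫_{a_j}^{b_j} x^{k−1} / R^{1/2}(x) dx. Then det A = ∫_{a_1}^{b_1} ⋯ ∫_{a_N}^{b_N} ∏_{1 ≤ j < k ≤ N} (x_k − x_j) · (dx_1 / R^{1/2}(x_1)) ⋯ (dx_N / R^{1/2}(x_N)), and since the integrand has constant sign on the region of integration, det A ≠ 0. -/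
/-!
Expanding the determinant by the Leibniz formula and integrating column by column (Fubini), the
determinant of a matrix of integrals is the integral of the determinant of the integrands, here
`det (x_j ^ k / R^{1/2}(x_j)) = V(x) · ∏ 1 / R^{1/2}(x_j)` with `V` the Vandermonde product.

On the gap `(a_j, b_j)` the polynomial `R` is positive, so `R^{1/2}` is real, continuous and
nonvanishing there, hence of constant sign; the Vandermonde product is positive on the product of
the gaps because the gaps are ordered. After multiplying by the values of `R^{1/2}` at the
midpoints of the gaps, the integrand is therefore positive, so the integral does not vanish.
All integrals converge because `R` has simple zeros at the ends of the gaps, so `|R|^{-1/2}` is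
dominated by `C ((x - a_j)(b_j - x))^{-1/2}`.
-/

open MeasureTheory Filter Set intervalIntegral

/-- `R(z) = ∏_{j=1}^{N+1} (z − b_{j−1})(z − a_j)`, reindexed as
`∏_{j=0}^{N} (z − b_j)(z − a_{j+1})`. -/
noncomputable def Rpoly (N : ℕ) (a b : ℕ → ℝ) (z : ℂ) : ℂ :=
  ∏ j ∈ Finset.range (N + 1), ((z - (b j : ℂ)) * (z - (a (j + 1) : ℂ)))

open scoped ComplexOrder

namespace Matrix

variable {n α 𝕜 : Type*} [Fintype n] [DecidableEq n] [RCLike 𝕜] [MeasurableSpace α]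
  {μ : n → Measure α} [∀ j, SigmaFinite (μ j)] {f : n → n → α → 𝕜}

theorem integrable_det_of_integrable (hf : ∀ k j, Integrable (f k j) (μ j)) :
    Integrable (fun x : n → α => (of fun k j => f k j (x j)).det) (Measure.pi μ) := by
  simp_rw [det_apply', of_apply]
  exact integrable_finsetSum _ fun σ _ => (Integrable.fintype_prod fun j => hf (σ j) j).const_mul _

theorem det_integral_eq_integral_det (hf : ∀ k j, Integrable (f k j) (μ j)) :
    (of fun k j => ∫ x, f k j x ∂μ j).det =
      ∫ x, (of fun k j => f k j (x j)).det ∂Measure.pi μ := by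
  simp_rw [det_apply', of_apply]
  rw [integral_finsetSum _ fun σ _ => (Integrable.fintype_prod fun j => hf (σ j) j).const_mul _]
  simp_rw [MeasureTheory.integral_const_mul, integral_fintype_prod_eq_prod]

theorem det_vandermonde_transpose_mul_row {m : ℕ} {R : Type*} [CommRing R] (v c : Fin m → R) :
    (of fun k j : Fin m => v j ^ (k : ℕ) * c j).det =
      (∏ i, ∏ j ∈ Finset.Ioi i, (v j - v i)) * ∏ j, c j := by
  calc _ = (∏ j, c j) * (vandermonde v)ᵀ.det := by
        rw [← det_mul_row]
        congr 1
        ext k j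
        simp [mul_comm]
    _ = _ := by rw [det_transpose, det_vandermonde, mul_comm]

end Matrix

theorem det_moments_eq_setIntegral_vandermonde {m : ℕ} {s : Fin m → Set ℝ} {w : ℝ → ℂ}
    (hint : ∀ k j : Fin m, IntegrableOn (fun x : ℝ => (x : ℂ) ^ (k : ℕ) * w x) (s j)) :
    (Matrix.of fun k j : Fin m => ∫ x in s j, (x : ℂ) ^ (k : ℕ) * w x).det =
      ∫ x in univ.pi s, (∏ i, ∏ j ∈ Finset.Ioi i, ((x j : ℂ) - x i)) * ∏ j, w (x j) := by
  rw [Matrix.det_integral_eq_integral_det (μ := fun j => volume.restrict (s j)) hint, volume_pi,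
    Measure.restrict_pi_pi]
  simp_rw [Matrix.det_vandermonde_transpose_mul_row]

theorem integrableOn_vandermonde_mul {m : ℕ} {s : Fin m → Set ℝ} {w : ℝ → ℂ}
    (hint : ∀ k j : Fin m, IntegrableOn (fun x : ℝ => (x : ℂ) ^ (k : ℕ) * w x) (s j)) :
    IntegrableOn (fun x : Fin m → ℝ => (∏ i, ∏ j ∈ Finset.Ioi i, ((x j : ℂ) - x i)) * ∏ j, w (x j))
      (univ.pi s) := by
  have := Matrix.integrable_det_of_integrable (μ := fun j => volume.restrict (s j)) hint
  simp_rw [Matrix.det_vandermonde_transpose_mul_row] at this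
  rwa [IntegrableOn, volume_pi, Measure.restrict_pi_pi]

theorem setIntegral_ne_zero_of_pos {α : Type*} [MeasurableSpace α] {μ : Measure α} {s : Set α}
    {f : α → ℂ} (hs : MeasurableSet s) (hμs : μ s ≠ 0) (hf : IntegrableOn f s μ)
    (hpos : ∀ x ∈ s, 0 < f x) : ∫ x in s, f x ∂μ ≠ 0 := by
  have hre : ∀ x ∈ s, 0 < (f x).re := fun x hx => (Complex.pos_iff.1 (hpos x hx)).1
  have hint : 0 < ∫ x in s, (f x).re ∂μ := by
    rw [setIntegral_pos_iff_support_of_nonneg_ae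
      (ae_restrict_of_forall_mem hs fun x hx => (hre x hx).le) hf.re,
      inter_eq_right.2 fun x hx => Function.mem_support.2 (hre x hx).ne']
    exact pos_iff_ne_zero.2 hμs
  intro h
  rw [show ∫ x in s, (f x).re ∂μ = (∫ x in s, f x ∂μ).re from integral_re hf, h,
    Complex.zero_re] at hint
  exact lt_irrefl _ hint

theorem IsPreconnected.div_pos_of_sq_pos {X : Type*} [TopologicalSpace X] {s : Set X}
    (hs : IsPreconnected s) {w : X → ℂ} (hw : ContinuousOn w s) (hsq : ∀ x ∈ s, 0 < w x ^ 2)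
    {x y : X} (hx : x ∈ s) (hy : y ∈ s) : 0 < w y / w x := by
  have hreal : ∀ z ∈ s, w z = ((w z).re : ℂ) := fun z hz =>
    Complex.ext rfl (by simp [Complex.sq_nonneg_iff.1 (hsq z hz).le])
  have hne : ∀ z ∈ s, (w z).re ≠ 0 := fun z hz h0 => by
    have := hsq z hz
    rw [hreal z hz, h0] at this
    simp at this
  have hsign : ∀ {u v}, u ∈ s → v ∈ s → (w u).re < 0 → ¬0 < (w v).re := fun hu hv hneg hpos => by
    obtain ⟨z, hz, hz0⟩ := hs.intermediate_value hu hv (Complex.continuous_re.comp_continuousOn hw)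
      ⟨hneg.le, hpos.le⟩
    exact hne z hz hz0
  rw [hreal y hy, hreal x hx, ← Complex.ofReal_div, Complex.zero_lt_real, div_pos_iff]
  rcases (hne x hx).lt_or_gt with h | h
  · exact Or.inr ⟨(hne y hy).lt_or_gt.resolve_right (hsign hx hy h), h⟩
  · exact Or.inl ⟨(hne y hy).lt_or_gt.resolve_left fun h' => hsign hy hx h' h, h⟩

theorem rpow_neg_half_mul_le {u v : ℝ} (hu : 0 < u) (hv : 0 < v) :
    (u * v) ^ (-(1 / 2) : ℝ) ≤
      ((u + v) / 2) ^ (-(1 / 2) : ℝ) * (u ^ (-(1 / 2) : ℝ) + v ^ (-(1 / 2) : ℝ)) := by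
  have hu' := Real.rpow_nonneg hu.le (-(1 / 2) : ℝ)
  have hv' := Real.rpow_nonneg hv.le (-(1 / 2) : ℝ)
  rw [Real.mul_rpow hu.le hv.le]
  -- the larger of `u, v` is at least their mean
  rcases le_total u v with h | h
  · have : v ^ (-(1 / 2) : ℝ) ≤ ((u + v) / 2) ^ (-(1 / 2) : ℝ) :=
      Real.rpow_le_rpow_of_nonpos (by positivity) (by linarith) (by norm_num)
    nlinarith
  · have : u ^ (-(1 / 2) : ℝ) ≤ ((u + v) / 2) ^ (-(1 / 2) : ℝ) :=
      Real.rpow_le_rpow_of_nonpos (by positivity) (by linarith) (by norm_num)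
    nlinarith

theorem integrableOn_Ioc_of_norm_le_rpow_neg_half {E : Type*} [NormedAddCommGroup E]
    {g : ℝ → E} {α β C : ℝ} (hC : 0 ≤ C) (hg : AEStronglyMeasurable g (volume.restrict (Ioo α β)))
    (hle : ∀ x ∈ Ioo α β, ‖g x‖ ≤ C * ((x - α) * (β - x)) ^ (-(1 / 2) : ℝ)) :
    IntegrableOn g (Ioc α β) := by
  rcases le_or_gt β α with hβα | hαβ
  · simp [Ioc_eq_empty_of_le hβα]
  have hleft : IntervalIntegrable (fun x => (x - α) ^ (-(1 / 2) : ℝ)) volume α β := by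
    simpa using (intervalIntegrable_rpow' (a := 0) (b := β - α)
      (by norm_num : (-1 : ℝ) < -(1 / 2))).comp_sub_right α
  have hright : IntervalIntegrable (fun x => (β - x) ^ (-(1 / 2) : ℝ)) volume α β := by
    simpa using ((intervalIntegrable_rpow' (a := 0) (b := β - α)
      (by norm_num : (-1 : ℝ) < -(1 / 2))).comp_sub_left β).symm
  have hdom := ((hleft.add hright).const_mul (C * ((β - α) / 2) ^ (-(1 / 2) : ℝ))).1
  rw [integrableOn_Ioc_iff_integrableOn_Ioo]
  refine (hdom.mono_set Ioo_subset_Ioc_self).mono' hg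
    ((ae_restrict_iff' measurableSet_Ioo).2 (ae_of_all _ fun x hx => (hle x hx).trans ?_))
  have := rpow_neg_half_mul_le (sub_pos.2 hx.1) (sub_pos.2 hx.2)
  rw [show x - α + (β - x) = β - α by ring] at this
  simpa [mul_assoc] using mul_le_mul_of_nonneg_left this hC

theorem integrableOn_Ioc_inv_of_mul_le_sq_norm {𝕜 : Type*} [NormedDivisionRing 𝕜] {w : ℝ → 𝕜}
    {α β m : ℝ} (hm : 0 < m) (hw : ContinuousOn w (Ioo α β))
    (hlow : ∀ x ∈ Ioo α β, m * ((x - α) * (β - x)) ≤ ‖w x‖ ^ 2) :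
    IntegrableOn (fun x => (w x)⁻¹) (Ioc α β) := by
  have hpos : ∀ x ∈ Ioo α β, 0 < (x - α) * (β - x) := fun x hx =>
    mul_pos (sub_pos.2 hx.1) (sub_pos.2 hx.2)
  have hne : ∀ x ∈ Ioo α β, w x ≠ 0 := fun x hx h0 => by
    have := hlow x hx
    rw [h0, norm_zero] at this
    nlinarith [hpos x hx]
  refine integrableOn_Ioc_of_norm_le_rpow_neg_half (C := m ^ (-(1 / 2) : ℝ))
    (Real.rpow_nonneg hm.le _) ((hw.inv₀ hne).aestronglyMeasurable measurableSet_Ioo) fun x hx => ?_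
  have hnorm : 0 < ‖w x‖ := norm_pos_iff.2 (hne x hx)
  calc ‖(w x)⁻¹‖ = (‖w x‖ ^ 2) ^ (-(1 / 2) : ℝ) := by
        rw [norm_inv, Real.rpow_neg (by positivity), ← Real.sqrt_eq_rpow,
          Real.sqrt_sq hnorm.le]
    _ ≤ (m * ((x - α) * (β - x))) ^ (-(1 / 2) : ℝ) :=
        Real.rpow_le_rpow_of_nonpos (mul_pos hm (hpos x hx)) (hlow x hx) (by norm_num)
    _ = m ^ (-(1 / 2) : ℝ) * ((x - α) * (β - x)) ^ (-(1 / 2) : ℝ) :=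
        Real.mul_rpow hm.le (hpos x hx).le

section Gaps

variable {N : ℕ} {a b : ℕ → ℝ}

theorem strictMonoOn_b (hband : ∀ j ≤ N, b j < a (j + 1))
    (hgap : ∀ j, 1 ≤ j → j ≤ N → a j < b j) : StrictMonoOn b (Iic N) :=
  strictMonoOn_Iic_of_lt_succ fun m hm => (hband m hm.le).trans (hgap (m + 1) (by omega) hm)

theorem strictMonoOn_a_succ (hband : ∀ j ≤ N, b j < a (j + 1))
    (hgap : ∀ j, 1 ≤ j → j ≤ N → a j < b j) : StrictMonoOn (fun i => a (i + 1)) (Iic N) :=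
  strictMonoOn_Iic_of_lt_succ fun m hm => (hgap (m + 1) (by omega) hm).trans (hband (m + 1) hm)

theorem notMem_band_of_mem_gap (hband : ∀ j ≤ N, b j < a (j + 1))
    (hgap : ∀ j, 1 ≤ j → j ≤ N → a j < b j) {j : ℕ} (hj : j < N) {x : ℝ}
    (hx : x ∈ Ioo (a (j + 1)) (b (j + 1))) {i : ℕ} (hi : i ≤ N) : ¬(b i ≤ x ∧ x ≤ a (i + 1)) := by
  rintro ⟨hbx, hxa⟩
  rcases le_or_gt i j with hij | hij
  · have : a (i + 1) ≤ a (j + 1) := (strictMonoOn_a_succ hband hgap).monotoneOn hi hj.le hij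
    linarith [hx.1]
  · have : b (j + 1) ≤ b i := (strictMonoOn_b hband hgap).monotoneOn hj hi hij
    linarith [hx.2]

theorem vandermonde_pos_of_mem_gaps (hband : ∀ j ≤ N, b j < a (j + 1))
    (hgap : ∀ j, 1 ≤ j → j ≤ N → a j < b j) {x : Fin N → ℝ}
    (hx : ∀ j : Fin N, x j ∈ Ioo (a (j + 1)) (b (j + 1))) :
    0 < ∏ i, ∏ j ∈ Finset.Ioi i, ((x j : ℂ) - x i) := by
  refine Finset.prod_pos fun i _ => Finset.prod_pos fun j hij => ?_
  have hij : i < j := Finset.mem_Ioi.1 hij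
  have : b (i + 1) ≤ b j :=
    (strictMonoOn_b hband hgap).monotoneOn (mem_Iic.2 i.2) (mem_Iic.2 j.2.le) hij
  rw [← Complex.ofReal_sub, Complex.zero_lt_real]
  linarith [(hx i).2, hband j (by omega), (hx j).1]

noncomputable def bandPoly (N : ℕ) (a b : ℕ → ℝ) (x : ℝ) : ℝ :=
  ∏ i ∈ Finset.range (N + 1), (x - b i) * (x - a (i + 1))

theorem Rpoly_ofReal (N : ℕ) (a b : ℕ → ℝ) (x : ℝ) : Rpoly N a b x = bandPoly N a b x := by
  simp [Rpoly, bandPoly]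

noncomputable def gapCofactor (N : ℕ) (a b : ℕ → ℝ) (j : ℕ) (x : ℝ) : ℝ :=
  (x - b j) * (a (j + 2) - x) *
    ∏ i ∈ ((Finset.range (N + 1)).erase j).erase (j + 1), (x - b i) * (x - a (i + 1))

theorem bandPoly_eq_mul_gapCofactor {j : ℕ} (hj : j < N) (x : ℝ) :
    bandPoly N a b x = (x - a (j + 1)) * (b (j + 1) - x) * gapCofactor N a b j x := by
  have hjN : j ∈ Finset.range (N + 1) := Finset.mem_range.2 (by omega)
  have hjN' : j + 1 ∈ (Finset.range (N + 1)).erase j :=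
    Finset.mem_erase.2 ⟨by omega, Finset.mem_range.2 (by omega)⟩
  rw [bandPoly, ← Finset.mul_prod_erase _ _ hjN, ← Finset.mul_prod_erase _ _ hjN', gapCofactor]
  ring

theorem gapCofactor_pos (hband : ∀ j ≤ N, b j < a (j + 1))
    (hgap : ∀ j, 1 ≤ j → j ≤ N → a j < b j) {j : ℕ} (hj : j < N) {x : ℝ}
    (hx : x ∈ Icc (a (j + 1)) (b (j + 1))) : 0 < gapCofactor N a b j x := by
  refine mul_pos (mul_pos ?_ ?_) (Finset.prod_pos fun i hi => ?_)
  · linarith [hband j (by omega), hx.1]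
  · linarith [hband (j + 1) hj, hx.2]
  simp only [Finset.mem_erase, Finset.mem_range] at hi
  obtain ⟨hij, hij', hiN⟩ := hi
  rcases lt_or_gt_of_ne hij' with hij' | hij'
  · have : a (i + 1) < a (j + 1) :=
      strictMonoOn_a_succ hband hgap (mem_Iic.2 (by omega)) (mem_Iic.2 hj.le) hij'
    exact mul_pos (by linarith [hband i (by omega), hx.1]) (by linarith [hx.1])
  · have : b (j + 1) < b i :=
      strictMonoOn_b hband hgap (mem_Iic.2 hj) (mem_Iic.2 (by omega)) (by omega)
    exact mul_pos_of_neg_of_neg (by linarith [hx.2]) (by linarith [hband i (by omega), hx.2])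

theorem bandPoly_pos_of_mem_gap (hband : ∀ j ≤ N, b j < a (j + 1))
    (hgap : ∀ j, 1 ≤ j → j ≤ N → a j < b j) {j : ℕ} (hj : j < N) {x : ℝ}
    (hx : x ∈ Ioo (a (j + 1)) (b (j + 1))) : 0 < bandPoly N a b x := by
  rw [bandPoly_eq_mul_gapCofactor hj]
  exact mul_pos (mul_pos (sub_pos.2 hx.1) (sub_pos.2 hx.2))
    (gapCofactor_pos hband hgap hj (Ioo_subset_Icc_self hx))

theorem exists_pos_mul_le_bandPoly (hband : ∀ j ≤ N, b j < a (j + 1))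
    (hgap : ∀ j, 1 ≤ j → j ≤ N → a j < b j) {j : ℕ} (hj : j < N) :
    ∃ m > 0, ∀ x ∈ Icc (a (j + 1)) (b (j + 1)),
      m * ((x - a (j + 1)) * (b (j + 1) - x)) ≤ bandPoly N a b x := by
  have hcont : Continuous (gapCofactor N a b j) := by unfold gapCofactor; fun_prop
  obtain ⟨x₀, hx₀, hmin⟩ := isCompact_Icc.exists_isMinOn
    (nonempty_Icc.2 (hgap (j + 1) (by omega) hj).le) hcont.continuousOn
  refine ⟨gapCofactor N a b j x₀, gapCofactor_pos hband hgap hj hx₀, fun x hx => ?_⟩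
  rw [bandPoly_eq_mul_gapCofactor hj, mul_comm (gapCofactor N a b j x₀)]
  exact mul_le_mul_of_nonneg_left (hmin hx) (mul_nonneg (sub_nonneg.2 hx.1) (sub_nonneg.2 hx.2))

variable {w : ℝ → ℂ} {j : ℕ}

theorem integrableOn_inv_of_sq_eq_bandPoly (hband : ∀ j ≤ N, b j < a (j + 1))
    (hgap : ∀ j, 1 ≤ j → j ≤ N → a j < b j) (hj : j < N)
    (hw : ContinuousOn w (Ioo (a (j + 1)) (b (j + 1))))
    (hsq : ∀ x ∈ Ioo (a (j + 1)) (b (j + 1)), w x ^ 2 = bandPoly N a b x) :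
    IntegrableOn (fun x => (w x)⁻¹) (Ioc (a (j + 1)) (b (j + 1))) := by
  obtain ⟨m, hm, hlow⟩ := exists_pos_mul_le_bandPoly hband hgap hj
  refine integrableOn_Ioc_inv_of_mul_le_sq_norm hm hw fun x hx => ?_
  rw [← norm_pow, hsq x hx, Complex.norm_real, Real.norm_eq_abs]
  exact (hlow x (Ioo_subset_Icc_self hx)).trans (le_abs_self _)

theorem div_pos_of_sq_eq_bandPoly (hband : ∀ j ≤ N, b j < a (j + 1))
    (hgap : ∀ j, 1 ≤ j → j ≤ N → a j < b j) (hj : j < N)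
    (hw : ContinuousOn w (Ioo (a (j + 1)) (b (j + 1))))
    (hsq : ∀ x ∈ Ioo (a (j + 1)) (b (j + 1)), w x ^ 2 = bandPoly N a b x) {x y : ℝ}
    (hx : x ∈ Ioo (a (j + 1)) (b (j + 1))) (hy : y ∈ Ioo (a (j + 1)) (b (j + 1))) :
    0 < w y / w x :=
  isPreconnected_Ioo.div_pos_of_sq_pos hw (fun z hz => by
    rw [hsq z hz, Complex.zero_lt_real]; exact bandPoly_pos_of_mem_gap hband hgap hj hz) hx hy

theorem integrableOn_pow_mul_inv_of_sq_eq_bandPoly (hband : ∀ j ≤ N, b j < a (j + 1))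
    (hgap : ∀ j, 1 ≤ j → j ≤ N → a j < b j) (hj : j < N)
    (hw : ContinuousOn w (Ioo (a (j + 1)) (b (j + 1))))
    (hsq : ∀ x ∈ Ioo (a (j + 1)) (b (j + 1)), w x ^ 2 = bandPoly N a b x) (k : ℕ) :
    IntegrableOn (fun x : ℝ => (x : ℂ) ^ k * (w x)⁻¹) (Ioc (a (j + 1)) (b (j + 1))) :=
  .continuousOn_mul_of_subset (by fun_prop)
    (integrableOn_inv_of_sq_eq_bandPoly hband hgap hj hw hsq) isCompact_Icc measurableSet_Ioc
    Ioc_subset_Icc_self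

theorem setIntegral_vandermonde_mul_inv_ne_zero (hband : ∀ j ≤ N, b j < a (j + 1))
    (hgap : ∀ j, 1 ≤ j → j ≤ N → a j < b j)
    (hw : ∀ j : Fin N, ContinuousOn w (Ioo (a (j + 1)) (b (j + 1))))
    (hsq : ∀ j : Fin N, ∀ x ∈ Ioo (a (j + 1)) (b (j + 1)), w x ^ 2 = bandPoly N a b x) :
    ∫ x in univ.pi fun j : Fin N => Ioc (a (j + 1)) (b (j + 1)),
      (∏ i, ∏ j ∈ Finset.Ioi i, ((x j : ℂ) - x i)) * ∏ j, (w (x j))⁻¹ ≠ 0 := by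
  have hlt : ∀ j : Fin N, a (j + 1) < b (j + 1) := fun j => hgap (j + 1) (by omega) j.2
  let mid : Fin N → ℝ := fun j => (a (j + 1) + b (j + 1)) / 2
  have hmid : ∀ j : Fin N, mid j ∈ Ioo (a (j + 1)) (b (j + 1)) := fun j =>
    ⟨left_lt_add_div_two.2 (hlt j), add_div_two_lt_right.2 (hlt j)⟩
  have hint := integrableOn_vandermonde_mul fun k j =>
    integrableOn_pow_mul_inv_of_sq_eq_bandPoly hband hgap j.2 (hw j) (hsq j) k
  intro h0
  refine setIntegral_ne_zero_of_pos (s := univ.pi fun j : Fin N => Ioo (a (j + 1)) (b (j + 1)))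
    (f := fun x => (∏ j, w (mid j)) *
      ((∏ i, ∏ j ∈ Finset.Ioi i, ((x j : ℂ) - x i)) * ∏ j, (w (x j))⁻¹))
    (MeasurableSet.univ_pi fun _ => measurableSet_Ioo) ?_
    ((hint.mono_set (pi_mono fun j _ => Ioo_subset_Ioc_self)).const_mul _) (fun x hx => ?_) ?_
  · rw [volume_pi_pi]
    exact Finset.prod_ne_zero_iff.2 fun j _ => by
      rw [Real.volume_Ioo]
      exact (ENNReal.ofReal_pos.2 (sub_pos.2 (hlt j))).ne'
  · rw [mul_left_comm, ← Finset.prod_mul_distrib]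
    exact mul_pos (vandermonde_pos_of_mem_gaps hband hgap fun j => hx j (mem_univ j))
      (Finset.prod_pos fun j _ => by
        simpa [div_eq_mul_inv] using div_pos_of_sq_eq_bandPoly hband hgap j.2 (hw j) (hsq j)
          (hx j (mem_univ j)) (hmid j))
  · rw [MeasureTheory.integral_const_mul, setIntegral_congr_set (by
      rw [volume_pi]; exact Measure.pi_Ioo_ae_eq_pi_Ioc), h0, mul_zero]

end Gaps

theorem szego_matrix_det_general
    (N : ℕ) (a b : ℕ → ℝ)
    (hband : ∀ j ≤ N, b j < a (j + 1))
    (hgap : ∀ j, 1 ≤ j → j ≤ N → a j < b j)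
    (Rhalf : ℂ → ℂ)
    (hRan : ∀ z : ℂ, ¬(z.im = 0 ∧ ∃ j ≤ N, b j ≤ z.re ∧ z.re ≤ a (j + 1)) →
      AnalyticAt ℂ Rhalf z)
    (hRsq : ∀ z : ℂ, ¬(z.im = 0 ∧ ∃ j ≤ N, b j ≤ z.re ∧ z.re ≤ a (j + 1)) →
      (Rhalf z) ^ 2 = Rpoly N a b z)
    (A : Matrix (Fin N) (Fin N) ℂ)
    (hA : ∀ k j : Fin N, A k j =
      ∫ x in (a ((j : ℕ) + 1))..(b ((j : ℕ) + 1)), ((x : ℂ) ^ (k : ℕ) / Rhalf (x : ℂ))) :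
    A.det = (∫ x in Set.univ.pi (fun j : Fin N => Ioc (a ((j : ℕ) + 1)) (b ((j : ℕ) + 1))),
        ((∏ j : Fin N, ∏ k ∈ Finset.univ.filter (fun k : Fin N => j < k),
            (((x k : ℝ) : ℂ) - ((x j : ℝ) : ℂ))) *
          ∏ j : Fin N, (Rhalf ((x j : ℝ) : ℂ))⁻¹)) ∧
    A.det ≠ 0 := by
  have hoff : ∀ j : Fin N, ∀ x ∈ Ioo (a (j + 1)) (b (j + 1)),
      ¬((x : ℂ).im = 0 ∧ ∃ i ≤ N, b i ≤ (x : ℂ).re ∧ (x : ℂ).re ≤ a (i + 1)) :=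
    fun j x hx ⟨_, i, hi, hbx⟩ => notMem_band_of_mem_gap hband hgap j.2 hx hi hbx
  have hw : ∀ j : Fin N, ContinuousOn (fun x : ℝ => Rhalf x) (Ioo (a (j + 1)) (b (j + 1))) :=
    fun j x hx => ((hRan _ (hoff j x hx)).continuousAt.comp
      Complex.continuous_ofReal.continuousAt).continuousWithinAt
  have hsq : ∀ j : Fin N, ∀ x ∈ Ioo (a (j + 1)) (b (j + 1)), Rhalf x ^ 2 = bandPoly N a b x :=
    fun j x hx => (hRsq _ (hoff j x hx)).trans (Rpoly_ofReal N a b x)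
  have hA' : A = .of fun k j =>
      ∫ x in Ioc (a (j + 1)) (b (j + 1)), (x : ℂ) ^ (k : ℕ) * (Rhalf x)⁻¹ := by
    ext k j
    rw [hA, integral_of_le (hgap _ (by omega) j.2).le]
    simp [div_eq_mul_inv]
  rw [hA', det_moments_eq_setIntegral_vandermonde fun k j =>
    integrableOn_pow_mul_inv_of_sq_eq_bandPoly hband hgap j.2 (hw j) (hsq j) k]
  simp only [Finset.filter_lt_eq_Ioi, true_and]
  exact setIntegral_vandermonde_mul_inv_ne_zero (w := fun x : ℝ => Rhalf x) hband hgap hw hsq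

/-- The determinant of the matrix `A_{kj} = ∫_{a_j}^{b_j} x^{k−1}/R^{1/2}(x) dx` equals the
multiple integral of the Vandermonde product over the product of the gaps, and is nonzero. -/
theorem szego_matrix_det
    (N : ℕ) (hN : 1 ≤ N) (a b : ℕ → ℝ)
    (hband : ∀ j ≤ N, b j < a (j + 1))
    (hgap : ∀ j, 1 ≤ j → j ≤ N → a j < b j)
    (Rhalf : ℂ → ℂ)
    (hRan : ∀ z : ℂ, ¬(z.im = 0 ∧ ∃ j ≤ N, b j ≤ z.re ∧ z.re ≤ a (j + 1)) →
      AnalyticAt ℂ Rhalf z)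
    (hRsq : ∀ z : ℂ, ¬(z.im = 0 ∧ ∃ j ≤ N, b j ≤ z.re ∧ z.re ≤ a (j + 1)) →
      (Rhalf z) ^ 2 = Rpoly N a b z)
    (hRinf : Tendsto (fun z : ℂ => Rhalf z / z ^ (N + 1)) (cocompact ℂ) (nhds 1))
    (A : Matrix (Fin N) (Fin N) ℂ)
    (hA : ∀ k j : Fin N, A k j =
      ∫ x in (a ((j : ℕ) + 1))..(b ((j : ℕ) + 1)), ((x : ℂ) ^ (k : ℕ) / Rhalf (x : ℂ))) :
    A.det = (∫ x in Set.univ.pi (fun j : Fin N => Ioc (a ((j : ℕ) + 1)) (b ((j : ℕ) + 1))),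
        ((∏ j : Fin N, ∏ k ∈ Finset.univ.filter (fun k : Fin N => j < k),
            (((x k : ℝ) : ℂ) - ((x j : ℝ) : ℂ))) *
          ∏ j : Fin N, (Rhalf ((x j : ℝ) : ℂ))⁻¹)) ∧
    A.det ≠ 0 :=
  szego_matrix_det_general N a b hband hgap Rhalf hRan hRsq A hA
end

section
/- Let α > −1/2, ψ₀ > 0, δ > 0, and let f be an analytic function on {|z| < δ}, real-valued on (−δ, δ), with f(z) = πψ₀·z + O(z²) as z → 0. For u > 0 and n large enough, set ũ_n = n·f(u/(n·ψ₀)). Then J_{α−1/2}(ũ_n) = J_{α−1/2}(πu) + O(u^{α+1/2}/n) as n → ∞, uniformly for u in bounded subsets of (0,∞): for every bounded B ⊂ (0,∞) there exist C and n₀ such that |J_{α−1/2}(ũ_n) − J_{α−1/2}(πu)| ≤ C·u^{α+1/2}/n for all u ∈ B and n ≥ n₀. -/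
/-!
On `(0, ∞)` one has `J_ν(x) = x ^ ν * H(x)` with `H(x) = 2 ^ (-ν) ∑ cₘ (x / 2) ^ (2m)` entire,
because the ratio test gives the coefficient series infinite radius. Being `C¹`, `H` is bounded
and Lipschitz on compact intervals, so near `b > 0` the function `x ↦ x ^ ν * H(x)` has Lipschitz
constant `O(b ^ (ν - 1))`, uniformly for bounded `b`. On the other hand, the second-order Taylor
bound `f z = πψ₀ z + O(z²)` gives `ũₙ - πu = O(u² / n)`. Multiplying the two estimates at
`b = πu` yields `O(u ^ (ν + 1) / n)` with `ν + 1 = α + 1/2`.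
-/

open Filter Set

/-- Bessel function of the first kind `J_ν(x)` (series definition). -/
noncomputable def besselJ (ν x : ℝ) : ℝ :=
  ∑' m : ℕ, ((-1 : ℝ) ^ m / (m.factorial * Real.Gamma ((m : ℝ) + ν + 1))) *
    (x / 2) ^ (2 * (m : ℝ) + ν)

open Topology Asymptotics FormalMultilinearSeries

theorem AnalyticAt.isBigO_sub_sub_smul_deriv {𝕜 F : Type*} [NontriviallyNormedField 𝕜]
    [NormedAddCommGroup F] [NormedSpace 𝕜 F] {f : 𝕜 → F} {x : 𝕜} (hf : AnalyticAt 𝕜 f x) :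
    (fun y => f (x + y) - f x - y • deriv f x) =O[𝓝 0] fun y => ‖y‖ ^ 2 := by
  obtain ⟨p, hp⟩ := hf
  convert hp.isBigO_sub_partialSum_pow 2 using 2 with y
  simp only [FormalMultilinearSeries.partialSum, Finset.sum_range_succ, Finset.sum_range_zero,
    zero_add, hp.deriv, hp.coeff_zero, p.apply_eq_pow_smul_coeff (n := 1), pow_one,
    FormalMultilinearSeries.coeff, one_smul]
  abel

lemma eventually_abs_mul_re_sub_le {f : ℂ → ℂ} {c : ℝ} (hf : AnalyticAt ℂ f 0) (hf0 : f 0 = 0)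
    (hf' : deriv f 0 = c) (R : ℝ) :
    ∃ K, 0 ≤ K ∧ ∀ᶠ n : ℕ in atTop, ∀ x : ℝ, |x| ≤ R →
      |n * (f (x / n : ℝ)).re - c * x| ≤ K * x ^ 2 / n := by
  obtain ⟨K, hK, hO⟩ := hf.isBigO_sub_sub_smul_deriv.exists_nonneg
  obtain ⟨ε, hε, hball⟩ := Metric.eventually_nhds_iff.mp hO.bound
  refine ⟨K, hK, ?_⟩
  filter_upwards [eventually_gt_atTop 0,
    (tendsto_const_div_atTop_nhds_zero_nat R).eventually (gt_mem_nhds hε)] with n hn hRn x hx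
  have hn' : (0 : ℝ) < n := Nat.cast_pos.mpr hn
  have hxn : |x| / n < ε := (div_le_div_of_nonneg_right hx hn'.le).trans_lt hRn
  have hquad := hball (y := ((x / n : ℝ) : ℂ)) (by simpa using hxn)
  simp only [zero_add, hf0, hf', sub_zero, norm_pow, Complex.norm_real, Real.norm_eq_abs,
    sq_abs] at hquad
  calc |n * (f (x / n : ℝ)).re - c * x| = |n * (f (x / n : ℝ) - (x / n : ℝ) * c).re| := by
        rw [Complex.sub_re, Complex.re_ofReal_mul, Complex.ofReal_re]
        field_simp
    _ = n * |(f (x / n : ℝ) - (x / n : ℝ) * c).re| := by rw [abs_mul, abs_of_pos hn']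
    _ ≤ n * (K * (x / n) ^ 2) := by gcongr; exact (Complex.abs_re_le_norm _).trans hquad
    _ = K * x ^ 2 / n := by field_simp

lemma abs_rpow_sub_rpow_le (ν : ℝ) {p q a b : ℝ} (hp : 0 < p) (ha : a ∈ Icc p q)
    (hb : b ∈ Icc p q) : |a ^ ν - b ^ ν| ≤ |ν| * max (p ^ (ν - 1)) (q ^ (ν - 1)) * |a - b| := by
  have hderiv : ∀ x ∈ Icc p q, HasDerivWithinAt (· ^ ν) (ν * x ^ (ν - 1)) (Icc p q) x :=
    fun x hx => (Real.hasDerivAt_rpow_const (Or.inl (hp.trans_le hx.1).ne')).hasDerivWithinAt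
  have hbound : ∀ x ∈ Icc p q, ‖ν * x ^ (ν - 1)‖ ≤ |ν| * max (p ^ (ν - 1)) (q ^ (ν - 1)) := by
    intro x hx
    have hx0 : 0 < x := hp.trans_le hx.1
    rw [norm_mul, Real.norm_eq_abs, Real.norm_eq_abs, abs_of_pos (Real.rpow_pos_of_pos hx0 _)]
    gcongr
    rcases le_or_gt 0 (ν - 1) with h | h
    · exact (Real.rpow_le_rpow hx0.le hx.2 h).trans (le_max_right _ _)
    · exact (Real.rpow_le_rpow_of_nonpos hp hx.1 h.le).trans (le_max_left _ _)
  simpa [Real.norm_eq_abs] using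
    (convex_Icc p q).norm_image_sub_le_of_norm_hasDerivWithin_le hderiv hbound hb ha

lemma exists_abs_rpow_mul_sub_le {g : ℝ → ℝ} (hg : ContDiff ℝ 1 g) (ν R : ℝ) :
    ∃ C, 0 ≤ C ∧ ∀ a b, 0 < b → b ≤ R → |a - b| ≤ b / 2 →
      |a ^ ν * g a - b ^ ν * g b| ≤ C * b ^ (ν - 1) * |a - b| := by
  obtain ⟨L, hL⟩ := hg.contDiffOn.exists_lipschitzOnWith one_ne_zero (convex_Icc 0 (2 * R))
    isCompact_Icc
  obtain ⟨M, hM⟩ := isCompact_Icc.exists_bound_of_continuousOn (s := Icc 0 (2 * R))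
    hg.continuous.continuousOn
  set c := |ν| * max ((1 / 2) ^ (ν - 1)) ((3 / 2) ^ (ν - 1))
  refine ⟨c * max M 0 + L * |R|, by positivity, fun a b hb hbR hab => ?_⟩
  have ha : a ∈ Icc (1 / 2 * b) (3 / 2 * b) := by constructor <;> linarith [abs_le.mp hab]
  have hb' : b ∈ Icc (1 / 2 * b) (3 / 2 * b) := by constructor <;> linarith
  have haI : a ∈ Icc 0 (2 * R) := ⟨by linarith [ha.1], by linarith [ha.2]⟩
  have hbI : b ∈ Icc 0 (2 * R) := ⟨hb.le, by linarith⟩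
  have hrpow : |a ^ ν - b ^ ν| ≤ c * b ^ (ν - 1) * |a - b| := by
    have h := abs_rpow_sub_rpow_le ν (by positivity) ha hb'
    rwa [Real.mul_rpow (by norm_num) hb.le, Real.mul_rpow (by norm_num) hb.le,
      ← max_mul_of_nonneg _ _ (Real.rpow_nonneg hb.le _), ← mul_assoc] at h
  have hga : |g a| ≤ max M 0 := (hM a haI).trans (le_max_left _ _)
  have hlip : |g a - g b| ≤ L * |a - b| := by
    simpa [Real.dist_eq] using hL.dist_le_mul a haI b hbI
  have hbν : b ^ ν = b ^ (ν - 1) * b := by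
    rw [Real.rpow_sub_one hb.ne', div_mul_cancel₀ _ hb.ne']
  calc |a ^ ν * g a - b ^ ν * g b| = |(a ^ ν - b ^ ν) * g a + b ^ ν * (g a - g b)| := by ring_nf
    _ ≤ c * b ^ (ν - 1) * |a - b| * max M 0 + b ^ (ν - 1) * |R| * (L * |a - b|) := by
      refine (abs_add_le _ _).trans (add_le_add ?_ ?_)
      · rw [abs_mul]
        exact mul_le_mul hrpow hga (abs_nonneg _) (by positivity)
      · rw [abs_mul, abs_of_pos (Real.rpow_pos_of_pos hb ν), hbν]
        exact mul_le_mul (by gcongr; exact hbR.trans (le_abs_self R)) hlip (abs_nonneg _)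
          (by positivity)
    _ = (c * max M 0 + L * |R|) * b ^ (ν - 1) * |a - b| := by ring

noncomputable def besselCoeff (ν : ℝ) (m : ℕ) : ℝ :=
  (-1) ^ m / (m.factorial * Real.Gamma ((m : ℝ) + ν + 1))

lemma norm_besselCoeff (ν : ℝ) (m : ℕ) :
    ‖besselCoeff ν m‖ = (m.factorial * |Real.Gamma ((m : ℝ) + ν + 1)|)⁻¹ := by
  simp [besselCoeff]

lemma norm_besselCoeff_succ_div_norm (ν : ℝ) (hν : -1 < ν) (m : ℕ) :
    ‖besselCoeff ν (m + 1)‖ / ‖besselCoeff ν m‖ = ((m + 1) * (m + ν + 1))⁻¹ := by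
  have hpos : 0 < (m : ℝ) + ν + 1 := by linarith [m.cast_nonneg (α := ℝ)]
  have hΓ : Real.Gamma ((m + 1 : ℕ) + ν + 1) = (m + ν + 1) * Real.Gamma (m + ν + 1) := by
    rw [← Real.Gamma_add_one hpos.ne']; push_cast; ring_nf
  have := (Real.Gamma_pos_of_pos hpos).ne'
  have := (Nat.factorial_pos m).ne'
  rw [norm_besselCoeff, norm_besselCoeff, hΓ, Nat.factorial_succ, abs_mul,
    abs_of_pos hpos, abs_of_pos (Real.Gamma_pos_of_pos hpos)]
  field_simp
  push_cast
  ring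

lemma radius_ofScalars_besselCoeff (ν : ℝ) (hν : -1 < ν) :
    (ofScalars ℝ (besselCoeff ν)).radius = ⊤ := by
  refine ofScalars_radius_eq_top_of_tendsto ℝ _ (Eventually.of_forall fun m => ?_) ?_
  · have : 0 < Real.Gamma ((m : ℝ) + ν + 1) :=
      Real.Gamma_pos_of_pos (by linarith [m.cast_nonneg (α := ℝ)])
    exact div_ne_zero (pow_ne_zero _ (by norm_num)) (by positivity)
  · have hlin (a : ℝ) : Tendsto (fun m : ℕ => (m : ℝ) + a) atTop atTop :=
      tendsto_natCast_atTop_atTop.atTop_add tendsto_const_nhds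
    simp_rw [norm_besselCoeff_succ_div_norm ν hν, add_assoc]
    exact tendsto_inv_atTop_zero.comp ((hlin 1).atTop_mul_atTop₀ (hlin _))

lemma contDiff_ofScalarsSum_besselCoeff (ν : ℝ) (hν : -1 < ν) {n : WithTop ℕ∞} :
    ContDiff ℝ n (ofScalarsSum (E := ℝ) (besselCoeff ν)) := by
  have h := (ofScalars ℝ (besselCoeff ν)).hasFPowerSeriesOnBall
    (by simp [radius_ofScalars_besselCoeff ν hν])
  rw [radius_ofScalars_besselCoeff ν hν] at h
  exact AnalyticOnNhd.contDiff fun x _ => h.analyticAt_of_mem (by simp)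

noncomputable def besselJEntire (ν x : ℝ) : ℝ :=
  ofScalarsSum (E := ℝ) (besselCoeff ν) ((x / 2) ^ 2) / 2 ^ ν

lemma contDiff_besselJEntire (ν : ℝ) (hν : -1 < ν) {n : WithTop ℕ∞} :
    ContDiff ℝ n (besselJEntire ν) :=
  ((contDiff_ofScalarsSum_besselCoeff ν hν).comp (by fun_prop)).div_const _

lemma besselJ_eq_rpow_mul_besselJEntire (ν : ℝ) {x : ℝ} (hx : 0 < x) :
    besselJ ν x = x ^ ν * besselJEntire ν x := by
  have hx2 : 0 < x / 2 := half_pos hx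
  have hterm (m : ℕ) : (-1 : ℝ) ^ m / (m.factorial * Real.Gamma ((m : ℝ) + ν + 1)) *
      (x / 2) ^ (2 * (m : ℝ) + ν) = (x / 2) ^ ν * (besselCoeff ν m • ((x / 2) ^ 2) ^ m) := by
    rw [Real.rpow_add hx2, Real.rpow_mul hx2.le, Real.rpow_two, Real.rpow_natCast, besselCoeff,
      smul_eq_mul]
    ring
  rw [besselJ, tsum_congr hterm, tsum_mul_left, besselJEntire, ofScalars_sum_eq,
    Real.div_rpow hx.le zero_le_two]
  ring

lemma exists_abs_besselJ_sub_le (ν : ℝ) (hν : -1 < ν) (R : ℝ) :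
    ∃ C, 0 ≤ C ∧ ∀ a b, 0 < b → b ≤ R → |a - b| ≤ b / 2 →
      |besselJ ν a - besselJ ν b| ≤ C * b ^ (ν - 1) * |a - b| := by
  obtain ⟨C, hC, h⟩ := exists_abs_rpow_mul_sub_le (contDiff_besselJEntire ν hν) ν R
  refine ⟨C, hC, fun a b hb hbR hab => ?_⟩
  have ha : 0 < a := by linarith [abs_le.mp hab]
  rw [besselJ_eq_rpow_mul_besselJEntire ν ha, besselJ_eq_rpow_mul_besselJEntire ν hb]
  exact h a b hb hbR hab

theorem besselJ_minus_asymptotics_general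
    (α ψ₀ δ : ℝ) (hα : -1/2 < α) (hψ₀ : 0 < ψ₀) (hδ : 0 < δ)
    (f : ℂ → ℂ)
    (hfan : ∀ z ∈ Metric.ball (0 : ℂ) δ, AnalyticAt ℂ f z)
    (hf0 : f 0 = 0)
    (hf' : deriv f 0 = (Real.pi : ℂ) * (ψ₀ : ℂ)) :
    ∀ B : Set ℝ, B ⊆ Ioi 0 → Bornology.IsBounded B →
      ∃ C : ℝ, ∃ n₀ : ℕ, ∀ u ∈ B, ∀ n : ℕ, n₀ ≤ n →
        |besselJ (α - 1/2) ((n : ℝ) * (f (((u / ((n : ℝ) * ψ₀)) : ℝ) : ℂ)).re) -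
          besselJ (α - 1/2) (Real.pi * u)| ≤ C * u ^ (α + 1/2) / n := by
  intro B hB hBb
  obtain ⟨R, hR⟩ := hBb.exists_norm_le
  obtain ⟨C, hC, hJ⟩ := exists_abs_besselJ_sub_le (α - 1 / 2) (by linarith) (Real.pi * R)
  set ν := α - 1 / 2
  obtain ⟨K, hK, hfK⟩ := eventually_abs_mul_re_sub_le (c := Real.pi * ψ₀)
    (hfan 0 (Metric.mem_ball_self hδ)) hf0 (by push_cast; exact hf') (R / ψ₀)
  obtain ⟨n₀, hn₀⟩ := eventually_atTop.mp <| (hfK.and (eventually_gt_atTop 0)).and <|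
    (tendsto_const_div_atTop_nhds_zero_nat (K / ψ₀ ^ 2 * R)).eventually
      (ge_mem_nhds (half_pos Real.pi_pos))
  refine ⟨C * Real.pi ^ (ν - 1) * (K / ψ₀ ^ 2), n₀, fun u hu n hn => ?_⟩
  obtain ⟨⟨hclose, hn⟩, hsmall⟩ := hn₀ n hn
  have huR : u ≤ R := (le_abs_self u).trans (hR u hu)
  replace hu : 0 < u := hB hu
  set ũ := (n : ℝ) * (f (((u / ((n : ℝ) * ψ₀)) : ℝ) : ℂ)).re
  have hdiff : |ũ - Real.pi * u| ≤ K / ψ₀ ^ 2 * u ^ 2 / n := by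
    have h := hclose (u / ψ₀) (by rw [abs_of_pos (by positivity)]; gcongr)
    rwa [div_div, mul_comm ψ₀, mul_assoc, mul_div_cancel₀ _ hψ₀.ne', div_pow,
      ← mul_div_assoc, mul_div_right_comm K] at h
  have hhalf : |ũ - Real.pi * u| ≤ Real.pi * u / 2 :=
    calc |ũ - Real.pi * u| ≤ K / ψ₀ ^ 2 * u / n * u := hdiff.trans_eq (by ring)
      _ ≤ K / ψ₀ ^ 2 * R / n * u := by gcongr
      _ ≤ Real.pi / 2 * u := by gcongr
      _ = Real.pi * u / 2 := by ring
  calc |besselJ ν ũ - besselJ ν (Real.pi * u)|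
      ≤ C * (Real.pi * u) ^ (ν - 1) * |ũ - Real.pi * u| :=
        hJ _ _ (by positivity) (by gcongr) hhalf
    _ ≤ C * (Real.pi * u) ^ (ν - 1) * (K / ψ₀ ^ 2 * u ^ 2 / n) := by gcongr
    _ = C * Real.pi ^ (ν - 1) * (K / ψ₀ ^ 2) * u ^ (α + 1 / 2) / n := by
        rw [Real.mul_rpow Real.pi_pos.le hu.le, show α + 1 / 2 = ν - 1 + 2 by ring,
          Real.rpow_add hu, Real.rpow_two]
        ring

/-- With `ũ_n = n·f(u/(nψ₀))`, one has
`J_{α−1/2}(ũ_n) = J_{α−1/2}(πu) + O(u^{α+1/2}/n)`, uniformly for `u` in bounded subsets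
of `(0,∞)`. -/
theorem besselJ_minus_asymptotics
    (α ψ₀ δ : ℝ) (hα : -1/2 < α) (hψ₀ : 0 < ψ₀) (hδ : 0 < δ)
    (f : ℂ → ℂ)
    (hfan : ∀ z ∈ Metric.ball (0 : ℂ) δ, AnalyticAt ℂ f z)
    (hfreal : ∀ x : ℝ, x ∈ Ioo (-δ) δ → (f ((x : ℝ) : ℂ)).im = 0)
    (hf0 : f 0 = 0)
    (hf' : deriv f 0 = (Real.pi : ℂ) * (ψ₀ : ℂ)) :
    ∀ B : Set ℝ, B ⊆ Ioi 0 → Bornology.IsBounded B →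
      ∃ C : ℝ, ∃ n₀ : ℕ, ∀ u ∈ B, ∀ n : ℕ, n₀ ≤ n →
        |besselJ (α - 1/2) ((n : ℝ) * (f (((u / ((n : ℝ) * ψ₀)) : ℝ) : ℂ)).re) -
          besselJ (α - 1/2) (Real.pi * u)| ≤ C * u ^ (α + 1/2) / n :=
  besselJ_minus_asymptotics_general α ψ₀ δ hα hψ₀ hδ f hfan hf0 hf'
end
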